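/- Fix real numbers a ≥ 0 and M ≥ 0, an integer E ≥ 2, real numbers c_1, …, c_E, and an index e with 1 ≤ e ≤ E − 1. Let B(c) = Σ_{k=1}^{E} (M − c_k) · ∏_{j=k+1}^{E} (2 + a·c_j), and let c' be the sequence obtained from c by swapping the entries at positions e and e+1. Then B(c) − B(c') = (1 + a·M) · (c_{e+1} − c_e) · ∏_{j=e+2}^{E} (2 + a·c_j). In particular, if c_e ≥ c_{e+1} and 0 ≤ c_j ≤ M for all j, then B(c) ≤ B(c'). -/
import Mathlib


/-- The right-hand side of Theorem 1's bound (up to the positive factor `2η²δ²`):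
`B(c) = Σ_{k=1}^{E} (M − c_k) · Π_{j=k+1}^{E} (2 + a·c_j)` (empty products are `1`). -/
noncomputable def theoremOneBound (a M : ℝ) (E : ℕ) (c : ℕ → ℝ) : ℝ :=
  ∑ k ∈ Finset.Icc 1 E, (M - c k) * ∏ j ∈ Finset.Icc (k + 1) E, (2 + a * c j)

lemma prod_swap_mem (h : ℕ → ℝ) (s : Finset ℕ) (e : ℕ) (he : e ∈ s) (he1 : e + 1 ∈ s) :
    ∏ j ∈ s, h (Equiv.swap e (e + 1) j) = ∏ j ∈ s, h j := by
  apply Finset.prod_equiv (Equiv.swap e (e + 1))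
  · intro i
    rcases eq_or_ne i e with rfl | h1
    · simp [Equiv.swap_apply_left, he, he1]
    rcases eq_or_ne i (e + 1) with rfl | h2
    · simp [Equiv.swap_apply_right, he, he1]
    · rw [Equiv.swap_apply_of_ne_of_ne h1 h2]
  · intro i _; rfl

/-- **Adjacent-transposition lemma** underlying Corollary 1: swapping the entries of the
cardinality sequence at positions `e` and `e+1` (with `1 ≤ e ≤ E−1`) changes the bound by
`B(c) − B(c') = (1 + a·M)·(c_{e+1} − c_e)·Π_{j=e+2}^{E} (2 + a·c_j)`; in particular, if
`c_e ≥ c_{e+1}` and `0 ≤ c_j ≤ M` for all `j`, then `B(c) ≤ B(c')`. -/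
theorem adjacent_transposition (a M : ℝ) (ha : 0 ≤ a) (hM : 0 ≤ M)
    (E : ℕ) (hE : 2 ≤ E) (c : ℕ → ℝ) (e : ℕ) (he1 : 1 ≤ e) (he2 : e + 1 ≤ E) :
    theoremOneBound a M E c - theoremOneBound a M E (c ∘ Equiv.swap e (e + 1)) =
      (1 + a * M) * (c (e + 1) - c e) * ∏ j ∈ Finset.Icc (e + 2) E, (2 + a * c j) ∧
    ((c (e + 1) ≤ c e ∧ ∀ j : ℕ, 0 ≤ c j ∧ c j ≤ M) →
      theoremOneBound a M E c ≤ theoremOneBound a M E (c ∘ Equiv.swap e (e + 1))) := by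
  set σ := Equiv.swap e (e + 1) with hσ
  have hσe : σ e = e + 1 := Equiv.swap_apply_left _ _
  have hσe1 : σ (e + 1) = e := Equiv.swap_apply_right _ _
  have hσother : ∀ j, j ≠ e → j ≠ e + 1 → σ j = j := fun j h1 h2 =>
    Equiv.swap_apply_of_ne_of_ne h1 h2
  have hPeq : ∏ j ∈ Finset.Icc (e + 2) E, (2 + a * c (σ j))
      = ∏ j ∈ Finset.Icc (e + 2) E, (2 + a * c j) := by
    refine Finset.prod_congr rfl fun j hj => ?_
    have hj2 := (Finset.mem_Icc.mp hj).1
    rw [hσother j (by omega) (by omega)]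
  set P := ∏ j ∈ Finset.Icc (e + 2) E, (2 + a * c j) with hP
  set f : ℕ → ℝ := fun k =>
      (M - c k) * ∏ j ∈ Finset.Icc (k + 1) E, (2 + a * c j) -
      (M - (c ∘ σ) k) * ∏ j ∈ Finset.Icc (k + 1) E, (2 + a * (c ∘ σ) j) with hf
  have hzero : ∀ k ∈ Finset.Icc 1 E, k ∉ ({e, e + 1} : Finset ℕ) → f k = 0 := by
    intro k hk hk2
    have hk' := Finset.mem_Icc.mp hk
    simp only [Finset.mem_insert, Finset.mem_singleton, not_or] at hk2
    have hck : (c ∘ σ) k = c k := by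
      simp only [Function.comp_apply, hσother k hk2.1 hk2.2]
    rcases lt_or_gt_of_ne hk2.1 with hlt | hgt
    · -- k < e : both e, e+1 in Icc (k+1) E
      have hprod : ∏ j ∈ Finset.Icc (k + 1) E, (2 + a * c (σ j))
          = ∏ j ∈ Finset.Icc (k + 1) E, (2 + a * c j) := by
        exact prod_swap_mem (fun j => 2 + a * c j) _ e
          (Finset.mem_Icc.mpr ⟨by omega, by omega⟩)
          (Finset.mem_Icc.mpr ⟨by omega, by omega⟩)
      simp only [hf, Function.comp_apply, hσother k hk2.1 hk2.2, hprod, sub_self]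
    · -- k > e+1
      have hprod : ∏ j ∈ Finset.Icc (k + 1) E, (2 + a * c (σ j))
          = ∏ j ∈ Finset.Icc (k + 1) E, (2 + a * c j) := by
        refine Finset.prod_congr rfl fun j hj => ?_
        have hj2 := (Finset.mem_Icc.mp hj).1
        have hk3 : k ≠ e + 1 := hk2.2
        rw [hσother j (by omega) (by omega)]
      simp only [hf, Function.comp_apply, hσother k hk2.1 hk2.2, hprod, sub_self]
  have hsub : ({e, e + 1} : Finset ℕ) ⊆ Finset.Icc 1 E := by
    intro x hx
    simp only [Finset.mem_insert, Finset.mem_singleton] at hx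
    rcases hx with rfl | rfl <;> exact Finset.mem_Icc.mpr ⟨by omega, by omega⟩
  have hins : Finset.Icc (e + 1) E = insert (e + 1) (Finset.Icc (e + 2) E) := by
    ext j
    simp only [Finset.mem_Icc, Finset.mem_insert]
    omega
  have hnot : e + 1 ∉ Finset.Icc (e + 2) E := by
    simp only [Finset.mem_Icc]; omega
  have hfe : f e = (M - c e) * ((2 + a * c (e + 1)) * P) -
      (M - c (e + 1)) * ((2 + a * c e) * P) := by
    rw [hf]
    simp only [Function.comp_apply, hσe]
    rw [hins, Finset.prod_insert hnot, Finset.prod_insert hnot, hPeq, hσe1]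
  have hfe1 : f (e + 1) = (M - c (e + 1)) * P - (M - c e) * P := by
    rw [hf]
    simp only [Function.comp_apply, hσe1]
    rw [show e + 1 + 1 = e + 2 from rfl, hPeq]
  have key : theoremOneBound a M E c - theoremOneBound a M E (c ∘ σ) =
      (1 + a * M) * (c (e + 1) - c e) * P := by
    unfold theoremOneBound
    rw [← Finset.sum_sub_distrib]
    have : ∑ k ∈ Finset.Icc 1 E,
        ((M - c k) * ∏ j ∈ Finset.Icc (k + 1) E, (2 + a * c j) -
         (M - (c ∘ σ) k) * ∏ j ∈ Finset.Icc (k + 1) E, (2 + a * (c ∘ σ) j))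
        = ∑ k ∈ ({e, e + 1} : Finset ℕ), f k := by
      rw [← Finset.sum_subset hsub hzero]
    rw [this, Finset.sum_pair (by omega), hfe, hfe1]
    ring
  refine ⟨key, fun ⟨hce, hcb⟩ => ?_⟩
  have hPnn : 0 ≤ P := Finset.prod_nonneg fun j _ => by
    have := (hcb j).1
    nlinarith
  have h1 : (1 + a * M) * (c (e + 1) - c e) ≤ 0 :=
    mul_nonpos_of_nonneg_of_nonpos (by nlinarith) (by linarith)
  nlinarith [mul_nonpos_of_nonpos_of_nonneg h1 hPnn, key]
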